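/- Suppose moreover that the maps D_i : [0,∞) → ℝ^{d×d} are continuous and that φ belongs to 𝒞 = {φ ∈ C⁰([−η_M,0],ℝ^d) : φ(0) = Σ_{i=1}^M D_i(0) φ(−η_i)}. Then the unique solution z of the difference-delay system z(t) = Σ_{i=1}^M D_i(t) z(t−η_i) with initial condition φ is continuous on [−η_M,∞) and satisfies the equation for all t ≥ 0. -/

import Mathlib

/-!
Method of steps. If every delay is at least `h > 0`, the right-hand side at time `t` only
involves values at times `≤ t - h`. Hence the iterates, started at `φ`, of the map that keeps
`φ` on `(-∞, 0]` and evaluates the right-hand side on `(0, ∞)` stabilise on `(-∞, k h]` after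
`k` steps, and gluing them gives the solution; uniqueness is the same induction. Each iterate
is continuous because the compatibility condition makes the two branches agree at `t = 0`.
-/

open MeasureTheory Matrix Filter Set
open scoped ENNReal

/-- Euclidean norm of a vector in `ℝ^ι`. -/
noncomputable def euclNorm {ι : Type*} [Fintype ι] (x : ι → ℝ) : ℝ :=
  Real.sqrt (∑ j, (x j) ^ 2)

/-- `z` belongs to `L^p_loc([-ηM, ∞), ℝ^d)` and satisfies the time-varying difference-delay
system `z(t) = ∑ i, D i (t) * z (t - η i)` for a.e. `t ≥ 0` (`ηM` is the largest delay;
the values of `z` on `[-ηM, 0]` are its initial condition). -/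
def DelaySol (d M : ℕ) (η : Fin M → ℝ) (D : Fin M → ℝ → Matrix (Fin d) (Fin d) ℝ)
    (ηM : ℝ) (p : ℝ≥0∞) (z : ℝ → Fin d → ℝ) : Prop :=
  (∀ b : ℝ, MemLp z p (volume.restrict (Set.Icc (-ηM) b))) ∧
  (∀ᵐ t ∂(volume.restrict (Set.Ici (0 : ℝ))), z t = ∑ i, (D i t).mulVec (z (t - η i)))

/-- `L^p` exponential stability of the difference-delay system. -/
def DelayLpStable (d M : ℕ) (η : Fin M → ℝ) (D : Fin M → ℝ → Matrix (Fin d) (Fin d) ℝ)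
    (ηM : ℝ) (p : ℝ≥0∞) : Prop :=
  ∃ C > (0 : ℝ), ∃ γ > (0 : ℝ), ∀ z, DelaySol d M η D ηM p z → ∀ t ≥ (0 : ℝ),
    eLpNorm (fun θ => euclNorm (z (t + θ))) p (volume.restrict (Set.Icc (-ηM) 0)) ≤
      ENNReal.ofReal (C * Real.exp (-γ * t)) *
        eLpNorm (fun θ => euclNorm (z θ)) p (volume.restrict (Set.Icc (-ηM) 0))

/-- `C⁰` exponential stability of the difference-delay system: continuous solutions
(the equation holding for all `t ≥ 0` forces the compatibility condition at `t = 0`). -/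
def DelayC0Stable (d M : ℕ) (η : Fin M → ℝ) (D : Fin M → ℝ → Matrix (Fin d) (Fin d) ℝ)
    (ηM : ℝ) : Prop :=
  ∃ C > (0 : ℝ), ∃ γ > (0 : ℝ), ∀ z : ℝ → Fin d → ℝ,
    ContinuousOn z (Set.Ici (-ηM)) →
    (∀ t ≥ (0 : ℝ), z t = ∑ i, (D i t).mulVec (z (t - η i))) →
    ∀ t ≥ (0 : ℝ), ∀ θ ∈ Set.Icc (-ηM) (0 : ℝ),
      euclNorm (z (t + θ)) ≤ C * Real.exp (-γ * t) *
        ⨆ θ' : Set.Icc (-ηM) (0 : ℝ), euclNorm (z (θ' : ℝ))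

theorem ContinuousOn.continuous_comp_projIcc {X : Type*} [TopologicalSpace X] {f : ℝ → X}
    {a b : ℝ} (hab : a ≤ b) (hf : ContinuousOn f (Icc a b)) :
    Continuous fun t => f (projIcc a b hab t) :=
  hf.comp_continuous (continuous_subtype_val.comp continuous_projIcc) fun t =>
    (projIcc a b hab t).2

theorem le_natCeil_div_mul {h : ℝ} (t : ℝ) (hh : 0 < h) : t ≤ ⌈t / h⌉₊ * h :=
  (div_le_iff₀ hh).1 (Nat.le_ceil _)

noncomputable section MethodOfSteps

variable {n ι : Type*} [Fintype n] [Fintype ι]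
  (φ : ℝ → n → ℝ) (D : ι → ℝ → Matrix n n ℝ) (η : ι → ℝ) {h : ℝ}

def delayStep (z : ℝ → n → ℝ) : ℝ → n → ℝ := fun t =>
  if t ≤ 0 then φ t else ∑ i, (D i t).mulVec (z (t - η i))

theorem delayStep_eqOn_Iic (hη : ∀ i, h ≤ η i) {z₁ z₂ : ℝ → n → ℝ} {a : ℝ}
    (hz : EqOn z₁ z₂ (Iic a)) :
    EqOn (delayStep φ D η z₁) (delayStep φ D η z₂) (Iic (a + h)) := by
  intro t (ht : t ≤ a + h)
  simp only [delayStep]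
  split_ifs
  · rfl
  · exact Finset.sum_congr rfl fun i _ => by
      rw [hz (show t - η i ≤ a by linarith [hη i])]

theorem delayStep_iterate_succ_eqOn (hη : ∀ i, h ≤ η i) (k : ℕ) :
    EqOn ((delayStep φ D η)^[k + 1] φ) ((delayStep φ D η)^[k] φ) (Iic (k * h)) := by
  induction k with
  | zero =>
    intro t (ht : t ≤ (0 : ℕ) * h)
    simp only [Nat.cast_zero, zero_mul] at ht
    simp [delayStep, ht]
  | succ k ih =>
    have hk : ((k + 1 : ℕ) : ℝ) * h = k * h + h := by push_cast; ring
    rw [Function.iterate_succ_apply'] at ih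
    rw [hk, Function.iterate_succ_apply', Function.iterate_succ_apply' _ k]
    exact delayStep_eqOn_Iic φ D η hη ih

theorem delayStep_iterate_eqOn_of_le (hh : 0 ≤ h) (hη : ∀ i, h ≤ η i) {k m : ℕ}
    (hkm : k ≤ m) :
    EqOn ((delayStep φ D η)^[m] φ) ((delayStep φ D η)^[k] φ) (Iic (k * h)) := by
  induction m, hkm using Nat.le_induction with
  | base => exact eqOn_refl _ _
  | succ m hkm ih =>
    refine EqOn.trans ?_ ih
    exact (delayStep_iterate_succ_eqOn φ D η hη m).mono (Iic_subset_Iic.2 (by gcongr))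

theorem continuous_delayStep (hφ : ContinuousOn φ (Iic 0))
    (hD : ∀ i, ContinuousOn (D i) (Ici 0)) {z : ℝ → n → ℝ} (hz : Continuous z)
    (hcompat : φ 0 = ∑ i, (D i 0).mulVec (z (-η i))) :
    Continuous (delayStep φ D η z) := by
  refine continuous_if_le continuous_id continuous_const hφ ?_ ?_
  · exact continuousOn_finsetSum _ fun i _ =>
      (continuous_fst.matrix_mulVec continuous_snd).comp_continuousOn
        ((hD i).prodMk (hz.comp (continuous_sub_right _)).continuousOn)
  · rintro t rfl
    simpa using hcompat

theorem continuous_delayStep_iterate (hh : 0 ≤ h) (hη : ∀ i, h ≤ η i) (hφ : Continuous φ)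
    (hD : ∀ i, ContinuousOn (D i) (Ici 0)) (hcompat : φ 0 = ∑ i, (D i 0).mulVec (φ (-η i))) :
    ∀ k, Continuous ((delayStep φ D η)^[k] φ)
  | 0 => hφ
  | k + 1 => by
    rw [Function.iterate_succ_apply']
    refine continuous_delayStep φ D η hφ.continuousOn hD
      (continuous_delayStep_iterate hh hη hφ hD hcompat k) ?_
    rw [hcompat]
    refine Finset.sum_congr rfl fun i _ => ?_
    have hi : -η i ≤ (0 : ℕ) * h := by push_cast; linarith [hη i]
    rw [delayStep_iterate_eqOn_of_le φ D η hh hη (Nat.zero_le k) hi]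
    rfl

def delaySolution (h : ℝ) : ℝ → n → ℝ := fun t =>
  (delayStep φ D η)^[⌈t / h⌉₊] φ t

theorem delaySolution_eqOn_iterate (hh : 0 < h) (hη : ∀ i, h ≤ η i) (k : ℕ) :
    EqOn (delaySolution φ D η h) ((delayStep φ D η)^[k] φ) (Iic (k * h)) := by
  intro t ht
  have hceil := le_natCeil_div_mul t hh
  rcases le_total k ⌈t / h⌉₊ with hk | hk
  · exact delayStep_iterate_eqOn_of_le φ D η hh.le hη hk ht
  · exact (delayStep_iterate_eqOn_of_le φ D η hh.le hη hk hceil).symm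

theorem delaySolution_eqOn_Iic_zero (hh : 0 < h) (hη : ∀ i, h ≤ η i) :
    EqOn (delaySolution φ D η h) φ (Iic 0) := by
  simpa using delaySolution_eqOn_iterate φ D η hh hη 0

theorem continuous_delaySolution (hh : 0 < h) (hη : ∀ i, h ≤ η i) (hφ : Continuous φ)
    (hD : ∀ i, ContinuousOn (D i) (Ici 0)) (hcompat : φ 0 = ∑ i, (D i 0).mulVec (φ (-η i))) :
    Continuous (delaySolution φ D η h) := by
  refine continuous_iff_continuousAt.2 fun t => ?_
  have hlt : t < (⌈t / h⌉₊ + 1 : ℕ) * h := by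
    push_cast; linarith [le_natCeil_div_mul t hh]
  refine (continuous_delayStep_iterate φ D η hh.le hη hφ hD hcompat
    (⌈t / h⌉₊ + 1)).continuousAt.congr ?_
  filter_upwards [Iio_mem_nhds hlt] with s hs
  exact (delaySolution_eqOn_iterate φ D η hh hη _ (mem_Iic.2 hs.le)).symm

theorem delaySolution_eq_sum (hh : 0 < h) (hη : ∀ i, h ≤ η i)
    (hcompat : φ 0 = ∑ i, (D i 0).mulVec (φ (-η i))) {t : ℝ} (ht : 0 ≤ t) :
    delaySolution φ D η h t = ∑ i, (D i t).mulVec (delaySolution φ D η h (t - η i)) := by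
  set k := ⌈t / h⌉₊
  have htk : t ≤ k * h := le_natCeil_div_mul t hh
  have htk' : t ≤ (k + 1 : ℕ) * h := by push_cast; linarith
  rw [delaySolution_eqOn_iterate φ D η hh hη (k + 1) htk', Function.iterate_succ_apply']
  rcases ht.eq_or_lt with rfl | ht
  · simp only [delayStep, le_refl, if_true, hcompat, zero_sub]
    exact Finset.sum_congr rfl fun i _ => by
      rw [delaySolution_eqOn_Iic_zero φ D η hh hη (show -η i ≤ 0 by linarith [hη i])]
  · simp only [delayStep, ht.not_ge, if_false]
    exact Finset.sum_congr rfl fun i _ => by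
      rw [delaySolution_eqOn_iterate φ D η hh hη k (show t - η i ≤ k * h by linarith [hη i])]

end MethodOfSteps

theorem eqOn_Ici_of_delay_eq {n ι : Type*} [Fintype n] [Fintype ι]
    {D : ι → ℝ → Matrix n n ℝ} {η : ι → ℝ} {h r : ℝ} (hh : 0 < h) (hηh : ∀ i, h ≤ η i)
    (hηr : ∀ i, η i ≤ r) {z₁ z₂ : ℝ → n → ℝ}
    (hz₁ : ∀ t ≥ (0 : ℝ), z₁ t = ∑ i, (D i t).mulVec (z₁ (t - η i)))
    (hz₂ : ∀ t ≥ (0 : ℝ), z₂ t = ∑ i, (D i t).mulVec (z₂ (t - η i)))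
    (h₀ : EqOn z₁ z₂ (Icc (-r) 0)) : EqOn z₁ z₂ (Ici (-r)) := by
  have hstep : ∀ k : ℕ, EqOn z₁ z₂ (Icc (-r) (k * h)) := by
    intro k
    induction k with
    | zero => simpa using h₀
    | succ k ih =>
      rintro t ⟨htr, htk⟩
      rcases le_or_gt t 0 with ht | ht
      · exact h₀ ⟨htr, ht⟩
      · rw [hz₁ t ht.le, hz₂ t ht.le]
        refine Finset.sum_congr rfl fun i _ => ?_
        push_cast at htk
        rw [ih ⟨by linarith [hηr i], by linarith [hηh i]⟩]
  intro t (ht : -r ≤ t)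
  exact hstep _ ⟨ht, le_natCeil_div_mul t hh⟩

/-- If the maps `D i` are continuous and the continuous initial condition
`φ` satisfies the compatibility condition `φ 0 = ∑ i, D i (0) * φ (−η i)`, then the unique
solution of the difference-delay system with initial condition `φ` is continuous on
`[−ηM, ∞)` and satisfies the equation for all `t ≥ 0`. -/
theorem delay_continuous_solution
    (d M : ℕ) (hM : 1 ≤ M)
    (η : Fin M → ℝ) (hηpos : ∀ i, 0 < η i) (hηmono : Monotone η)
    (D : Fin M → ℝ → Matrix (Fin d) (Fin d) ℝ)
    (hDcont : ∀ i k l, ContinuousOn (fun t => D i t k l) (Set.Ici (0 : ℝ)))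
    (ηM : ℝ) (hηM : ηM = η ⟨M - 1, by omega⟩)
    (φ : ℝ → Fin d → ℝ) (hφcont : ContinuousOn φ (Set.Icc (-ηM) 0))
    (hφcompat : φ 0 = ∑ i, (D i 0).mulVec (φ (-η i))) :
    ∃ z : ℝ → Fin d → ℝ,
      (ContinuousOn z (Set.Ici (-ηM)) ∧ (∀ t ∈ Set.Icc (-ηM) (0 : ℝ), z t = φ t) ∧
        (∀ t ≥ (0 : ℝ), z t = ∑ i, (D i t).mulVec (z (t - η i)))) ∧
      (∀ z' : ℝ → Fin d → ℝ,
        (ContinuousOn z' (Set.Ici (-ηM)) ∧ (∀ t ∈ Set.Icc (-ηM) (0 : ℝ), z' t = φ t) ∧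
          (∀ t ≥ (0 : ℝ), z' t = ∑ i, (D i t).mulVec (z' (t - η i)))) →
        ∀ t ∈ Set.Ici (-ηM), z' t = z t) := by
  set h := η ⟨0, hM⟩
  have hh : 0 < h := hηpos _
  have hηh : ∀ i, h ≤ η i := fun i => hηmono (Fin.le_iff_val_le_val.2 (Nat.zero_le _))
  have hηr : ∀ i, η i ≤ ηM := fun i =>
    hηM ▸ hηmono (Fin.le_iff_val_le_val.2 (Nat.le_sub_one_of_lt i.2))
  have hr : -ηM ≤ 0 := by linarith [hηr ⟨0, hM⟩]
  set φ' : ℝ → Fin d → ℝ := fun t => φ (projIcc (-ηM) 0 hr t)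
  have hφ'φ : EqOn φ' φ (Icc (-ηM) 0) := fun t ht => by simp only [φ', projIcc_of_mem hr ht]
  have hD : ∀ i, ContinuousOn (D i) (Ici 0) := fun i =>
    continuousOn_pi.2 fun k => continuousOn_pi.2 (hDcont i k)
  have hcompat : φ' 0 = ∑ i, (D i 0).mulVec (φ' (-η i)) := by
    rw [hφ'φ ⟨hr, le_rfl⟩, hφcompat]
    exact Finset.sum_congr rfl fun i _ => by
      rw [hφ'φ ⟨by linarith [hηr i], by linarith [hηpos i]⟩]
  have hzφ : EqOn (delaySolution φ' D η h) φ (Icc (-ηM) 0) := fun t ht =>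
    (delaySolution_eqOn_Iic_zero φ' D η hh hηh ht.2).trans (hφ'φ ht)
  have hz := fun t (ht : t ≥ 0) => delaySolution_eq_sum φ' D η hh hηh hcompat ht
  refine ⟨delaySolution φ' D η h, ⟨?_, hzφ, hz⟩, ?_⟩
  · exact (continuous_delaySolution φ' D η hh hηh (hφcont.continuous_comp_projIcc hr) hD
      hcompat).continuousOn
  · rintro z' ⟨-, hz'φ, hz'⟩
    exact eqOn_Ici_of_delay_eq hh hηh hηr hz' hz fun t ht => (hz'φ t ht).trans (hzφ ht).symm
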